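/- arXiv:1307.3972 — 2 statements merged into one kernel-verified Lean document; each statement's English description precedes it below -/
import Mathlib

section
/- The map ψ satisfies, at every point (x,y) ∈ ℝ²: ⟨∂ψ/∂x, ∂ψ/∂x⟩ = 0, ⟨∂ψ/∂y, ∂ψ/∂y⟩ = 0, and ⟨∂ψ/∂x, ∂ψ/∂y⟩ = −1. In particular ψ is an immersion whose induced metric is the flat Lorentzian metric −dx⊗dy − dy⊗dx. -/
open Complex

/-- The real part of the index-one Hermitian form on `ℂ²`,
`⟨z,w⟩ = Re(-conj z₁ · w₁ + conj z₂ · w₂)`: the flat Lorentzian inner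
product of the Lorentzian complex plane `C²₁`. -/
noncomputable def lorentzInner (z w : ℂ × ℂ) : ℝ :=
  (-(starRingEnd ℂ z.1) * w.1 + (starRingEnd ℂ z.2) * w.2).re

/-- `K(y) = (1/2)∫₀^y cosh²(α t) dt − ∫₀^y f'(t) sinh(α t) dt`. -/
noncomputable def Kfun (α f : ℝ → ℝ) (y : ℝ) : ℝ :=
  ((1 : ℝ) / 2) * (∫ t in (0:ℝ)..y, Real.cosh (α t) ^ 2)
    - ∫ t in (0:ℝ)..y, deriv f t * Real.sinh (α t)

/-- `S(y) = ∫₀^y sinh(α t) dt`. -/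
noncomputable def Sfun (α : ℝ → ℝ) (y : ℝ) : ℝ :=
  ∫ t in (0:ℝ)..y, Real.sinh (α t)

/-- The surface of Theorem 5.1. -/
noncomputable def ψ (α f : ℝ → ℝ) (x y : ℝ) : ℂ × ℂ :=
  ((x : ℂ) + Complex.I * (f y : ℂ) + (Kfun α f y : ℂ),
   (x : ℂ) - (y : ℂ) + Complex.I * (f y : ℂ) + (Kfun α f y : ℂ)
     - Complex.I * (Sfun α y : ℂ))

/-- Theorem 5.1 (induced metric): `ψ` is an isometric immersion inducing the
flat Lorentzian metric `−dx⊗dy − dy⊗dx`. -/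
theorem psi_induced_metric (α f : ℝ → ℝ)
    (hα : ContDiff ℝ (⊤ : ℕ∞) α) (hf : ContDiff ℝ (⊤ : ℕ∞) f) :
    ∀ x y : ℝ,
      lorentzInner (deriv (fun t => ψ α f t y) x) (deriv (fun t => ψ α f t y) x) = 0 ∧
      lorentzInner (deriv (fun t => ψ α f x t) y) (deriv (fun t => ψ α f x t) y) = 0 ∧
      lorentzInner (deriv (fun t => ψ α f t y) x) (deriv (fun t => ψ α f x t) y) = -1 := by
  intro x y
  -- derivative in x
  have hx : HasDerivAt (fun t : ℝ => ψ α f t y) ((1 : ℂ), (1 : ℂ)) x := by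
    have h1 : HasDerivAt (fun t : ℝ => (t : ℂ)) 1 x := by
      simpa using (hasDerivAt_id x).ofReal_comp
    have ha : HasDerivAt (fun t : ℝ =>
        (t : ℂ) + Complex.I * (f y : ℂ) + (Kfun α f y : ℂ)) 1 x := by
      simpa using (h1.add_const (Complex.I * (f y : ℂ))).add_const (Kfun α f y : ℂ)
    have hb : HasDerivAt (fun t : ℝ =>
        (t : ℂ) - (y : ℂ) + Complex.I * (f y : ℂ) + (Kfun α f y : ℂ)
          - Complex.I * (Sfun α y : ℂ)) 1 x := by
      simpa using (((h1.sub_const (y : ℂ)).add_const (Complex.I * (f y : ℂ))).add_const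
        (Kfun α f y : ℂ)).sub_const (Complex.I * (Sfun α y : ℂ))
    exact ha.prodMk hb
  -- real derivatives in y
  have hfd : HasDerivAt f (deriv f y) y := (hf.differentiable (by simp) y).hasDerivAt
  have hfc : Continuous (deriv f) := hf.continuous_deriv (by simp)
  have hαc : Continuous α := hα.continuous
  have hcont1 : Continuous fun t => Real.cosh (α t) ^ 2 :=
    (Real.continuous_cosh.comp hαc).pow 2
  have hcont2 : Continuous fun t => deriv f t * Real.sinh (α t) :=
    hfc.mul (Real.continuous_sinh.comp hαc)
  have hcont3 : Continuous fun t => Real.sinh (α t) := Real.continuous_sinh.comp hαc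
  have hI1 : HasDerivAt (fun u => ∫ t in (0:ℝ)..u, Real.cosh (α t) ^ 2)
      (Real.cosh (α y) ^ 2) y :=
    intervalIntegral.integral_hasDerivAt_right (hcont1.intervalIntegrable 0 y)
      (hcont1.stronglyMeasurableAtFilter _ _) hcont1.continuousAt
  have hI2 : HasDerivAt (fun u => ∫ t in (0:ℝ)..u, deriv f t * Real.sinh (α t))
      (deriv f y * Real.sinh (α y)) y :=
    intervalIntegral.integral_hasDerivAt_right (hcont2.intervalIntegrable 0 y)
      (hcont2.stronglyMeasurableAtFilter _ _) hcont2.continuousAt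
  have hS : HasDerivAt (Sfun α) (Real.sinh (α y)) y :=
    intervalIntegral.integral_hasDerivAt_right (hcont3.intervalIntegrable 0 y)
      (hcont3.stronglyMeasurableAtFilter _ _) hcont3.continuousAt
  set k : ℝ := (1 / 2) * Real.cosh (α y) ^ 2 - deriv f y * Real.sinh (α y) with hk
  have hK : HasDerivAt (Kfun α f) k y :=
    (hI1.const_mul ((1:ℝ)/2)).sub hI2
  set p : ℝ := deriv f y
  set s : ℝ := Real.sinh (α y)
  -- complex derivative in y
  have hKc : HasDerivAt (fun t : ℝ => ((Kfun α f t : ℝ) : ℂ)) (k : ℂ) y :=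
    hK.ofReal_comp
  have hfcz : HasDerivAt (fun t : ℝ => ((f t : ℝ) : ℂ)) (p : ℂ) y := hfd.ofReal_comp
  have hSc : HasDerivAt (fun t : ℝ => ((Sfun α t : ℝ) : ℂ)) (s : ℂ) y := hS.ofReal_comp
  have hid : HasDerivAt (fun t : ℝ => (t : ℂ)) 1 y := by
    simpa using (hasDerivAt_id y).ofReal_comp
  have ha : HasDerivAt (fun t : ℝ =>
      (x : ℂ) + Complex.I * (f t : ℂ) + (Kfun α f t : ℂ))
      (Complex.I * (p : ℂ) + (k : ℂ)) y := by
    exact ((hfcz.const_mul Complex.I).const_add (x : ℂ)).add hKc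
  have hb : HasDerivAt (fun t : ℝ =>
      (x : ℂ) - (t : ℂ) + Complex.I * (f t : ℂ) + (Kfun α f t : ℂ)
        - Complex.I * (Sfun α t : ℂ))
      ((0 - 1 + Complex.I * (p : ℂ) + (k : ℂ)) - Complex.I * (s : ℂ)) y := by
    exact ((((hasDerivAt_const y (x : ℂ)).sub hid).add
      (hfcz.const_mul Complex.I)).add hKc).sub (hSc.const_mul Complex.I)
  have hy : HasDerivAt (fun t : ℝ => ψ α f x t)
      ((Complex.I * (p : ℂ) + (k : ℂ),
        (0 - 1 + Complex.I * (p : ℂ) + (k : ℂ)) - Complex.I * (s : ℂ))) y :=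
    ha.prodMk hb
  rw [hx.deriv, hy.deriv]
  have hcosh : Real.cosh (α y) ^ 2 = Real.sinh (α y) ^ 2 + 1 := Real.cosh_sq (α y)
  refine ⟨?_, ?_, ?_⟩
  · simp [lorentzInner]
  · simp only [lorentzInner, map_add, map_sub, map_mul, map_one, map_zero,
      Complex.conj_ofReal, Complex.conj_I, neg_mul, Complex.add_re, Complex.sub_re,
      Complex.neg_re, Complex.mul_re, Complex.mul_im, Complex.add_im, Complex.sub_im,
      Complex.neg_im, Complex.I_re, Complex.I_im, Complex.ofReal_re, Complex.ofReal_im,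
      Complex.zero_re, Complex.zero_im, Complex.one_re, Complex.one_im]
    rw [hk, hcosh]; ring
  · simp only [lorentzInner, map_add, map_sub, map_mul, map_one, map_zero,
      Complex.conj_ofReal, Complex.conj_I, neg_mul, Complex.add_re, Complex.sub_re,
      Complex.neg_re, Complex.mul_re, Complex.mul_im, Complex.add_im, Complex.sub_im,
      Complex.neg_im, Complex.I_re, Complex.I_im, Complex.ofReal_re, Complex.ofReal_im,
      Complex.zero_re, Complex.zero_im, Complex.one_re, Complex.one_im]
    ring
end

section
/- The map ψ satisfies ⟨i·∂ψ/∂x, ∂ψ/∂y⟩ = −sinh(α(y)) at every point (x,y) ∈ ℝ². Together with ⟨∂ψ/∂x,∂ψ/∂x⟩ = ⟨∂ψ/∂y,∂ψ/∂y⟩ = 0 and ⟨∂ψ/∂x,∂ψ/∂y⟩ = −1, this says that the Wirtinger angle of the Lorentzian surface ψ at (x,y) equals α(y). -/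
open Complex

set_option maxHeartbeats 1000000 in
/-- Theorem 5.1 (Wirtinger angle): `⟨i·∂ψ/∂x, ∂ψ/∂y⟩ = −sinh(α y)`, so that
the Wirtinger angle of the Lorentzian surface `ψ` at `(x,y)` equals `α y`. -/
theorem psi_wirtinger_angle (α f : ℝ → ℝ)
    (hα : ContDiff ℝ (⊤ : ℕ∞) α) (hf : ContDiff ℝ (⊤ : ℕ∞) f) :
    ∀ x y : ℝ,
      lorentzInner (Complex.I • deriv (fun t => ψ α f t y) x)
        (deriv (fun t => ψ α f x t) y) = -Real.sinh (α y) := by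
  intro x y
  have hαc : Continuous α := hα.continuous
  -- derivative in x
  have hx1 : HasDerivAt (fun t : ℝ => ((t : ℂ) + Complex.I * (f y : ℂ) + (Kfun α f y : ℂ))) 1 x := by
    simpa using ((Complex.ofRealCLM.hasDerivAt (x := x)).add_const
      (Complex.I * (f y : ℂ) + (Kfun α f y : ℂ))).congr_of_eventuallyEq
      (Filter.Eventually.of_forall (p := fun t : ℝ => ((t : ℂ) + Complex.I * (f y : ℂ) + (Kfun α f y : ℂ)) = Complex.ofRealCLM t + (Complex.I * (f y : ℂ) + (Kfun α f y : ℂ))) fun t => by rw [Complex.ofRealCLM_apply]; ring)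
  have hx2 : HasDerivAt (fun t : ℝ => ((t : ℂ) - (y : ℂ) + Complex.I * (f y : ℂ)
      + (Kfun α f y : ℂ) - Complex.I * (Sfun α y : ℂ))) 1 x := by
    have := (Complex.ofRealCLM.hasDerivAt (x := x))
    simpa using ((this.sub_const (y : ℂ)).add_const (Complex.I * (f y : ℂ))
      |>.add_const ((Kfun α f y : ℂ))).sub_const (Complex.I * (Sfun α y : ℂ))
  have hdx : deriv (fun t => ψ α f t y) x = ((1 : ℂ), (1 : ℂ)) := by
    have : HasDerivAt (fun t => ψ α f t y) ((1 : ℂ), (1 : ℂ)) x := hx1.prodMk hx2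
    exact this.deriv
  -- derivative in y
  have hK : HasDerivAt (Kfun α f)
      (((1:ℝ)/2) * Real.cosh (α y) ^ 2 - deriv f y * Real.sinh (α y)) y := by
    have h1 : HasDerivAt (fun u => ∫ t in (0:ℝ)..u, Real.cosh (α t) ^ 2)
        (Real.cosh (α y) ^ 2) y :=
      (Continuous.integral_hasStrictDerivAt (by fun_prop) 0 y).hasDerivAt
    have h2 : HasDerivAt (fun u => ∫ t in (0:ℝ)..u, deriv f t * Real.sinh (α t))
        (deriv f y * Real.sinh (α y)) y := by
      refine (Continuous.integral_hasStrictDerivAt ?_ 0 y).hasDerivAt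
      exact (hf.continuous_deriv (by simp)).mul (Real.continuous_sinh.comp hαc)
    exact (h1.const_mul ((1:ℝ)/2)).sub h2
  have hS : HasDerivAt (Sfun α) (Real.sinh (α y)) y :=
    (Continuous.integral_hasStrictDerivAt (Real.continuous_sinh.comp hαc) 0 y).hasDerivAt
  have hfy : HasDerivAt f (deriv f y) y := (hf.differentiable (by simp) y).hasDerivAt
  set k : ℝ := ((1:ℝ)/2) * Real.cosh (α y) ^ 2 - deriv f y * Real.sinh (α y)
  have hy1 : HasDerivAt (fun t : ℝ => ((x : ℂ) + Complex.I * (f t : ℂ) + (Kfun α f t : ℂ)))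
      (Complex.I * ((deriv f y : ℝ) : ℂ) + (k : ℂ)) y :=
    ((hfy.ofReal_comp.const_mul Complex.I).const_add ((x:ℂ))).add hK.ofReal_comp
  have hy2 : HasDerivAt (fun t : ℝ => ((x : ℂ) - (t : ℂ) + Complex.I * (f t : ℂ)
      + (Kfun α f t : ℂ) - Complex.I * (Sfun α t : ℂ)))
      (-1 + Complex.I * ((deriv f y : ℝ) : ℂ) + (k : ℂ) - Complex.I * (Real.sinh (α y) : ℂ)) y := by
    have h0 : HasDerivAt (fun t : ℝ => ((x : ℂ) - (t : ℂ))) (-1) y := by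
      simpa using (Complex.ofRealCLM.hasDerivAt (x := y)).const_sub (x : ℂ)
    exact (((h0.add (hfy.ofReal_comp.const_mul Complex.I)).add hK.ofReal_comp).sub
      (hS.ofReal_comp.const_mul Complex.I))
  have hdy : deriv (fun t => ψ α f x t) y
      = (Complex.I * ((deriv f y : ℝ) : ℂ) + (k : ℂ),
         -1 + Complex.I * ((deriv f y : ℝ) : ℂ) + (k : ℂ) - Complex.I * (Real.sinh (α y) : ℂ)) :=
    (hy1.prodMk hy2).deriv
  rw [hdx, hdy]
  simp only [lorentzInner, Prod.smul_fst, Prod.smul_snd, smul_eq_mul, mul_one]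
  simp [Complex.ext_iff]
  simp [← Complex.ofReal_sinh]
  ring
end
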